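/- arXiv:0901.0175 — 5 statements merged into one kernel-verified Lean document; each statement's English description precedes it below -/
import Mathlib

section
/- Let I be an infinite set, (K_i)_{i∈I} a family of non-trivial Hausdorff topological groups, and G an essential subgroup of the product K = ∏_{i∈I} K_i. Then G contains an injective sequence converging to the identity of K. -/
/-- The subgroup of the product consisting of elements trivial outside coordinate `i`. -/
def coordSubgroup {I : Type*} (K : I → Type*) [∀ i, Group (K i)] (i : I) :
    Subgroup (∀ i, K i) where
  carrier := {f | ∀ j, j ≠ i → f j = 1}
  one_mem' := fun _ _ => rfl
  mul_mem' := by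
    intro a b ha hb j hj
    simp [Pi.mul_apply, ha j hj, hb j hj]
  inv_mem' := by
    intro a ha j hj
    simp [Pi.inv_apply, ha j hj]

/-- If `I` is infinite, each `K i` is a non-trivial Hausdorff topological group and `G` is an
essential subgroup of the product `∀ i, K i`, then `G` contains an injective sequence
converging to the identity. -/
theorem stmt_3 {I : Type*} [Infinite I] (K : I → Type*) [∀ i, Group (K i)]
    [∀ i, TopologicalSpace (K i)] [∀ i, IsTopologicalGroup (K i)] [∀ i, T2Space (K i)]
    [∀ i, Nontrivial (K i)] (G : Subgroup (∀ i, K i))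
    (hess : ∀ H : Subgroup (∀ i, K i), H.Normal → IsClosed (H : Set (∀ i, K i)) →
      H ≠ ⊥ → G ⊓ H ≠ ⊥) :
    ∃ x : ℕ → (∀ i, K i), (∀ n, x n ∈ G) ∧ Function.Injective x ∧
      Filter.Tendsto x Filter.atTop (nhds 1) := by
  -- the coordinate subgroups are normal
  have hnorm : ∀ i, (coordSubgroup K i).Normal := by
    intro i
    constructor
    intro a ha g j hj
    simp [coordSubgroup] at ha ⊢
    simp [ha j hj]
  -- closed
  have hclosed : ∀ i, IsClosed ((coordSubgroup K i : Set (∀ i, K i))) := by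
    intro i
    have : (coordSubgroup K i : Set (∀ i, K i)) =
        ⋂ j ∈ {j | j ≠ i}, (fun f : ∀ i, K i => f j) ⁻¹' {1} := by
      ext f
      simp only [Set.mem_iInter, Set.mem_preimage, Set.mem_singleton_iff, Set.mem_setOf_eq]
      rfl
    rw [this]
    exact isClosed_biInter fun j _ => (isClosed_singleton).preimage (continuous_apply j)
  -- nontrivial
  have hne : ∀ i, coordSubgroup K i ≠ ⊥ := by
    intro i h
    classical
    obtain ⟨k, hk⟩ := exists_ne (1 : K i)
    have hmem : Pi.mulSingle i k ∈ coordSubgroup K i := by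
      intro j hj
      exact Pi.mulSingle_eq_of_ne hj k
    rw [h, Subgroup.mem_bot] at hmem
    exact hk (by simpa using congrFun hmem i)
  -- pick nontrivial elements of G supported at each coordinate
  have key : ∀ i : I, ∃ g : ∀ i, K i, g ∈ G ∧ (∀ j, j ≠ i → g j = 1) ∧ g ≠ 1 := by
    intro i
    have := hess (coordSubgroup K i) (hnorm i) (hclosed i) (hne i)
    obtain ⟨⟨g, hg⟩, hg1⟩ := (Subgroup.ne_bot_iff_exists_ne_one.mp this)
    exact ⟨g, hg.1, hg.2, by simpa [Subtype.ext_iff] using hg1⟩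
  choose g hgG hgsupp hgne using key
  let e : ℕ ↪ I := Infinite.natEmbedding I
  refine ⟨fun n => g (e n), fun n => hgG (e n), ?_, ?_⟩
  · -- injective
    intro n m h
    replace h : g (e n) = g (e m) := h
    by_contra hnm
    have hen : e n ≠ e m := fun he => hnm (e.injective he)
    have h1 : g (e n) (e n) ≠ 1 := by
      intro h0
      apply hgne (e n)
      funext j
      by_cases hj : j = e n
      · subst hj; exact h0
      · exact hgsupp (e n) j hj
    have h2 : g (e m) (e n) = 1 := hgsupp (e m) (e n) hen
    rw [h] at h1
    exact h1 h2
  · -- tendsto 1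
    rw [tendsto_pi_nhds]
    intro j
    have : ∀ᶠ n in Filter.atTop, g (e n) j = 1 := by
      by_cases hj : ∃ n₀, e n₀ = j
      · obtain ⟨n₀, hn₀⟩ := hj
        filter_upwards [Filter.eventually_gt_atTop n₀] with n hn
        apply hgsupp
        intro he
        have : n₀ = n := e.injective (hn₀.trans he)
        omega
      · filter_upwards with n
        exact hgsupp (e n) j fun he => hj ⟨n, he.symm⟩
    exact Filter.Tendsto.congr' (this.mono fun n hn => hn.symm) tendsto_const_nhds
end

section
/- A dense subgroup G of a compact Hausdorff topological group K is minimal if and only if G is essential in K, i.e., G ∩ H is non-trivial for every non-trivial closed normal subgroup H of K. -/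
open Filter Set Topology

section Aux

/-- The topology induced by an injective map into a Hausdorff space is Hausdorff. -/
theorem aux_t2_induced {X Y : Type*} [ty : TopologicalSpace Y] [T2Space Y] (f : X → Y)
    (hf : Function.Injective f) : @T2Space X (TopologicalSpace.induced f ty) := by
  letI := TopologicalSpace.induced f ty
  exact Topology.IsEmbedding.t2Space ⟨⟨rfl⟩, hf⟩

variable {K : Type*} [Group K] [TopologicalSpace K] [IsTopologicalGroup K]
    [CompactSpace K] [T2Space K]

/-- Essential implies minimal. -/
theorem aux_min (G : Subgroup K) (hdense : Dense (G : Set K))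
    (hess : ∀ H : Subgroup K, H.Normal → IsClosed (H : Set K) → H ≠ ⊥ → G ⊓ H ≠ ⊥)
    (t' : TopologicalSpace G) (tg' : @IsTopologicalGroup G t' _) (ht2 : @T2Space G t')
    (hle : (instTopologicalSpaceSubtype : TopologicalSpace G) ≤ t') :
    t' = (instTopologicalSpaceSubtype : TopologicalSpace G) := by
  -- Note: inside this proof, `t'` is a local instance, so `𝓝` on `G` refers to `t'`.
  set ι : G → K := Subtype.val with hι
  set F : Filter G := 𝓝 1 with hF
  set Nset : Set K := ⋂ U ∈ F, closure (ι '' U) with hNset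
  have memNset : ∀ x : K, x ∈ Nset ↔ ∀ U ∈ F, x ∈ closure (ι '' U) := by
    intro x; simp [hNset]
  have hNclosed : IsClosed Nset := by
    rw [hNset]
    exact isClosed_iInter fun U => isClosed_iInter fun _ => isClosed_closure
  -- Nset is a subgroup
  have hone : (1 : K) ∈ Nset := by
    rw [memNset]
    intro U hU
    exact subset_closure ⟨1, mem_of_mem_nhds hU, rfl⟩
  have hmul : ∀ a b : K, a ∈ Nset → b ∈ Nset → a * b ∈ Nset := by
    intro a b ha hb
    rw [memNset] at ha hb ⊢
    intro U hU
    obtain ⟨V, hV, hVU⟩ := exists_nhds_one_split hU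
    rw [mem_closure_iff_nhds]
    intro t ht
    have hmem : (fun p : K × K => p.1 * p.2) ⁻¹' t ∈ 𝓝 a ×ˢ 𝓝 b := by
      rw [← nhds_prod_eq]
      exact (continuous_mul.tendsto (a, b)) ht
    obtain ⟨A, hA, B, hB, hAB⟩ := Filter.mem_prod_iff.mp hmem
    obtain ⟨_, hvA, v, hvV, rfl⟩ := mem_closure_iff_nhds.mp (ha V hV) A hA
    obtain ⟨_, hwB, w, hwV, rfl⟩ := mem_closure_iff_nhds.mp (hb V hV) B hB
    refine ⟨ι v * ι w, ?_, ?_⟩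
    · exact hAB (Set.mk_mem_prod hvA hwB)
    · exact ⟨v * w, hVU v hvV w hwV, rfl⟩
  have himage : ∀ (φ : K ≃ₜ K) (W U : Set G), (∀ w ∈ W, ∃ u ∈ U, φ (ι w) = ι u) →
      ∀ x ∈ closure (ι '' W), φ x ∈ closure (ι '' U) := by
    intro φ W U hWU x hx
    have h1 : φ x ∈ φ '' closure (ι '' W) := ⟨x, hx, rfl⟩
    rw [φ.image_closure] at h1
    refine closure_mono ?_ h1
    rintro _ ⟨_, ⟨w, hw, rfl⟩, rfl⟩
    obtain ⟨u, hu, huw⟩ := hWU w hw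
    exact huw ▸ ⟨u, hu, rfl⟩
  have hinv : ∀ a : K, a ∈ Nset → a⁻¹ ∈ Nset := by
    intro a ha
    rw [memNset] at ha ⊢
    intro U hU
    have hV : (fun g : G => g⁻¹) ⁻¹' U ∈ F := by
      have htd : Filter.Tendsto (fun g : G => g⁻¹) F F := by
        have := continuous_inv.tendsto (1 : G)
        simpa [hF] using this
      exact htd hU
    refine himage (Homeomorph.inv K) _ U ?_ a (ha _ hV)
    intro w hw
    exact ⟨w⁻¹, hw, by simp [hι]⟩
  let N : Subgroup K :=
    { carrier := Nset
      one_mem' := hone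
      mul_mem' := fun {a b} ha hb => hmul a b ha hb
      inv_mem' := fun {a} ha => hinv a ha }
  have memN : ∀ x : K, x ∈ N ↔ x ∈ Nset := fun x => Iff.rfl
  -- G ∩ N is trivial, by Hausdorffness of t'
  have hGN : G ⊓ N = ⊥ := by
    rw [Subgroup.eq_bot_iff_forall]
    intro x hx
    obtain ⟨hxG, hxN⟩ := Subgroup.mem_inf.mp hx
    rw [memN, memNset] at hxN
    have key : ∀ W ∈ 𝓝 (⟨x, hxG⟩ : G), ∀ U ∈ F, (W ∩ U).Nonempty := by
      intro W hW U hU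
      have hW' : W ∈ @nhds G instTopologicalSpaceSubtype ⟨x, hxG⟩ := nhds_mono hle hW
      have e : @nhds G instTopologicalSpaceSubtype (⟨x, hxG⟩ : G) = comap ι (𝓝 x) :=
        nhds_induced ι ⟨x, hxG⟩
      rw [e] at hW'
      obtain ⟨O, hO, hOW⟩ := Filter.mem_comap.mp hW'
      obtain ⟨_, hzO, u, huU, rfl⟩ := mem_closure_iff_nhds.mp (hxN U hU) O hO
      exact ⟨u, hOW hzO, huU⟩
    have hne : Filter.NeBot (𝓝 (⟨x, hxG⟩ : G) ⊓ 𝓝 1) :=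
      Filter.inf_neBot_iff.mpr fun s hs s' hs' => key s hs s' hs'
    have h1 : (⟨x, hxG⟩ : G) = 1 := t2_iff_nhds.mp ht2 hne
    simpa using Subtype.ext_iff.mp h1
  -- N is normal
  have hconjG : ∀ (g : G) (x : K), x ∈ Nset → (g : K) * x * (g : K)⁻¹ ∈ Nset := by
    intro g x hx
    rw [memNset] at hx ⊢
    intro U hU
    have hcont : Continuous (fun a : G => g * a * g⁻¹) :=
      (continuous_const.mul continuous_id).mul continuous_const
    have hV : (fun a : G => g * a * g⁻¹) ⁻¹' U ∈ F := by
      have htd := hcont.tendsto (1 : G)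
      rw [mul_one, mul_inv_cancel] at htd
      exact htd hU
    have h2 := himage ((Homeomorph.mulLeft (g : K)).trans (Homeomorph.mulRight (g : K)⁻¹))
      _ U ?_ x (hx _ hV)
    · simpa [Homeomorph.trans_apply, mul_assoc] using h2
    · intro w hw
      refine ⟨g * w * g⁻¹, hw, ?_⟩
      simp [Homeomorph.trans_apply, hι, mul_assoc]
  have hNnormal : N.Normal := by
    have hCclosed : IsClosed {k : K | ∀ x ∈ Nset, k * x * k⁻¹ ∈ Nset} := by
      have e : {k : K | ∀ x ∈ Nset, k * x * k⁻¹ ∈ Nset}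
          = ⋂ x ∈ Nset, (fun k => k * x * k⁻¹) ⁻¹' Nset := by
        ext k; simp
      rw [e]
      exact isClosed_iInter fun x => isClosed_iInter fun _ =>
        hNclosed.preimage ((continuous_id.mul continuous_const).mul continuous_inv)
    have hGC : (G : Set K) ⊆ {k : K | ∀ x ∈ Nset, k * x * k⁻¹ ∈ Nset} :=
      fun k hk x hx => hconjG ⟨k, hk⟩ x hx
    have hCuniv : {k : K | ∀ x ∈ Nset, k * x * k⁻¹ ∈ Nset} = univ := by
      apply eq_univ_of_univ_subset
      calc univ = closure (G : Set K) := hdense.closure_eq.symm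
        _ ⊆ {k : K | ∀ x ∈ Nset, k * x * k⁻¹ ∈ Nset} := hCclosed.closure_subset_iff.mpr hGC
    exact ⟨fun n hn k =>
      (hCuniv ▸ (mem_univ k) : k ∈ {k : K | ∀ x ∈ Nset, k * x * k⁻¹ ∈ Nset}) n hn⟩
  -- essentiality forces N = ⊥
  have hNbot : N = ⊥ := by
    by_contra hN
    exact hess N hNnormal hNclosed hN hGN
  have hNset1 : Nset = {1} := by
    ext y
    rw [mem_singleton_iff, ← Subgroup.mem_bot (x := y), ← hNbot]
    exact (memN y).symm
  -- conclude convergence, hence equality of topologies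
  have hmaple : Filter.map ι F ≤ 𝓝 (1 : K) := by
    rw [le_iff_ultrafilter]
    intro u hu
    obtain ⟨x, -, hx⟩ := isCompact_univ.ultrafilter_le_nhds u (by simp)
    have hxN : x ∈ Nset := by
      rw [memNset]
      intro U hU
      rw [mem_closure_iff_nhds]
      intro t ht
      exact u.nonempty_of_mem (inter_mem (hx ht) (hu (image_mem_map hU)))
    have hx1 : x = 1 := by rwa [hNset1, mem_singleton_iff] at hxN
    exact hx1 ▸ hx
  have e1 : @nhds G instTopologicalSpaceSubtype 1 = comap ι (𝓝 (1 : K)) :=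
    nhds_induced ι 1
  have hle2 : F ≤ @nhds G instTopologicalSpaceSubtype 1 := by
    rw [e1]
    exact Filter.map_le_iff_le_comap.mp hmaple
  refine IsTopologicalGroup.ext tg' inferInstance ?_
  exact le_antisymm hle2 (nhds_mono hle)

/-- Minimal implies essential. -/
theorem aux_ess (G : Subgroup K) (hdense : Dense (G : Set K))
    (hmin : ∀ t' : TopologicalSpace G, @IsTopologicalGroup G t' _ → @T2Space G t' →
        (instTopologicalSpaceSubtype : TopologicalSpace G) ≤ t' →
        t' = (instTopologicalSpaceSubtype : TopologicalSpace G))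
    (H : Subgroup K) (hnorm : H.Normal) (hcl : IsClosed (H : Set K)) (hne : H ≠ ⊥) :
    G ⊓ H ≠ ⊥ := by
  intro hGH
  haveI := hnorm
  set f : G →* K ⧸ H := (QuotientGroup.mk' H).comp G.subtype with hf
  have hinj : Function.Injective f := by
    intro a b hab
    have h1 : f (a⁻¹ * b) = 1 := by
      rw [map_mul, map_inv, hab, inv_mul_cancel]
    have h2 : ((a⁻¹ * b : G) : K) ∈ H := by
      rwa [show f (a⁻¹ * b) = ((((a⁻¹ * b : G) : K) : K ⧸ H)) from rfl,
        QuotientGroup.eq_one_iff] at h1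
    have h3 : ((a⁻¹ * b : G) : K) ∈ G ⊓ H := Subgroup.mem_inf.mpr ⟨(a⁻¹ * b : G).2, h2⟩
    rw [hGH, Subgroup.mem_bot] at h3
    have h4 : (a⁻¹ * b : G) = 1 := Subtype.ext h3
    rwa [inv_mul_eq_one] at h4
  have hcont : Continuous (f : G → K ⧸ H) :=
    QuotientGroup.continuous_mk.comp continuous_subtype_val
  have heq := hmin (TopologicalSpace.induced f inferInstance) (topologicalGroup_induced f)
    (aux_t2_induced f hinj) (continuous_iff_le_induced.mp hcont)
  -- derive a contradiction
  obtain ⟨h, hh1⟩ := Subgroup.ne_bot_iff_exists_ne_one.mp hne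
  set x : K := (h : K) with hx
  set F : Filter G := comap (Subtype.val : G → K) (𝓝 x) with hFdef
  have hFne : F.NeBot := mem_closure_iff_comap_neBot.mp (hdense x)
  have hF1 : F ≤ @nhds G (TopologicalSpace.induced f inferInstance) 1 := by
    have e1 : @nhds G (TopologicalSpace.induced f inferInstance) 1 = comap f (𝓝 (f 1)) :=
      nhds_induced f 1
    have e2 : (f 1 : K ⧸ H) = ((x : K ⧸ H)) := by
      simp only [map_one]
      exact ((QuotientGroup.eq_one_iff x).mpr h.2).symm
    rw [e1, e2]
    calc F = comap Subtype.val (𝓝 x) := rfl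
      _ ≤ comap Subtype.val (comap (QuotientGroup.mk : K → K ⧸ H) (𝓝 ((x : K ⧸ H)))) :=
          comap_mono (QuotientGroup.continuous_mk.tendsto x).le_comap
      _ = comap f (𝓝 ((x : K ⧸ H))) := by rw [Filter.comap_comap]; rfl
  rw [heq] at hF1
  have e3 : @nhds G instTopologicalSpaceSubtype 1 = comap (Subtype.val : G → K) (𝓝 (1 : K)) :=
    nhds_induced _ _
  have hm1 : Filter.map (Subtype.val : G → K) F ≤ 𝓝 (1 : K) :=
    le_trans (map_mono (e3 ▸ hF1)) map_comap_le
  have hm2 : Filter.map (Subtype.val : G → K) F ≤ 𝓝 x := map_comap_le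
  haveI : Filter.NeBot (Filter.map (Subtype.val : G → K) F) := hFne.map _
  have hnb : Filter.NeBot (𝓝 (1 : K) ⊓ 𝓝 x) := Filter.neBot_of_le (le_inf hm1 hm2)
  have hx1 : (1 : K) = x := eq_of_nhds_neBot hnb
  exact hh1 (Subtype.ext hx1.symm)

end Aux

/-- Minimality criterion of Prodanov and Stephenson: a dense subgroup `G` of a compact
Hausdorff group `K` is a minimal topological group if and only if `G` is essential in `K`,
i.e. `G` meets every non-trivial closed normal subgroup of `K` non-trivially. -/
theorem stmt_7 {K : Type*} [Group K] [TopologicalSpace K] [IsTopologicalGroup K]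
    [CompactSpace K] [T2Space K] (G : Subgroup K) (hdense : Dense (G : Set K)) :
    (∀ t' : TopologicalSpace G, @IsTopologicalGroup G t' _ → @T2Space G t' →
        (instTopologicalSpaceSubtype : TopologicalSpace G) ≤ t' →
        t' = (instTopologicalSpaceSubtype : TopologicalSpace G)) ↔
      (∀ H : Subgroup K, H.Normal → IsClosed (H : Set K) → H ≠ ⊥ → G ⊓ H ≠ ⊥) := by
  constructor
  · exact fun hmin H hn hc hne => aux_ess G hdense hmin H hn hc hne
  · exact fun hess => aux_min G hdense hess
end

section
/- If K is a compact Hausdorff abelian group whose torsion subgroup t(K) is at most countable, then there exists a closed G_δ subgroup N of K with N ∩ t(K) = {0}; in particular N is torsion-free. -/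
open Set

/-- Auxiliary: any open nbhd of 0 contains an open symmetric nbhd U with U+U ⊆ W. -/
lemma aux_half {K : Type*} [AddCommGroup K] [TopologicalSpace K] [IsTopologicalAddGroup K]
    {W : Set K} (hW : W ∈ nhds (0 : K)) :
    ∃ U : Set K, IsOpen U ∧ (0 : K) ∈ U ∧ (∀ x ∈ U, -x ∈ U) ∧
      ∀ x ∈ U, ∀ y ∈ U, x + y ∈ W := by
  obtain ⟨V, hVo, hV0, hV⟩ := exists_open_nhds_zero_half hW
  refine ⟨V ∩ (-·) ⁻¹' V, hVo.inter (hVo.preimage continuous_neg), ⟨hV0, by simpa⟩,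
    ?_, ?_⟩
  · rintro x ⟨h1, h2⟩; exact ⟨h2, by simpa⟩
  · rintro x ⟨h1, -⟩ y ⟨h2, -⟩; exact hV x h1 y h2

/-- Every Gδ set containing 0 in a topological abelian group contains a closed Gδ subgroup. -/
lemma exists_closed_gdelta_subgroup {K : Type*} [AddCommGroup K] [TopologicalSpace K]
    [IsTopologicalAddGroup K] {A : Set K} (hA : IsGδ A) (h0 : (0 : K) ∈ A) :
    ∃ N : AddSubgroup K, IsClosed (N : Set K) ∧ IsGδ (N : Set K) ∧ (N : Set K) ⊆ A := by
  obtain ⟨V, hVo, rfl⟩ := hA.eq_iInter_nat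
  have hV0 : ∀ n, (0 : K) ∈ V n := fun n => mem_iInter.1 h0 n
  set P : ℕ → Set K → Prop := fun n U => IsOpen U ∧ (0 : K) ∈ U ∧ (∀ x ∈ U, -x ∈ U) ∧ U ⊆ V n
    with hP
  have base : {U : Set K // P 0 U} := by
    obtain ⟨U, h1, h2, h3, h4⟩ := Classical.indefiniteDescription _
      (aux_half ((hVo 0).mem_nhds (hV0 0)))
    exact ⟨U, h1, h2, h3, fun x hx => by simpa using h4 x hx 0 h2⟩
  have step : ∀ n, ∀ prev : {U : Set K // P n U},
      {U : Set K // P (n + 1) U ∧ ∀ x ∈ U, ∀ y ∈ U, x + y ∈ prev.1} := by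
    intro n prev
    have hW : (V (n + 1) ∩ prev.1) ∈ nhds (0 : K) :=
      ((hVo (n + 1)).inter prev.2.1).mem_nhds ⟨hV0 (n + 1), prev.2.2.1⟩
    obtain ⟨U, h1, h2, h3, h4⟩ := Classical.indefiniteDescription _ (aux_half hW)
    exact ⟨U, ⟨h1, h2, h3, fun x hx => by simpa using (h4 x hx 0 h2).1⟩,
      fun x hx y hy => (h4 x hx y hy).2⟩
  let g : ∀ n : ℕ, {U : Set K // P n U} :=
    fun n => Nat.rec base (fun n p => ⟨(step n p).1, (step n p).2.1⟩) n
  have hadd : ∀ n, ∀ x ∈ (g (n + 1)).1, ∀ y ∈ (g (n + 1)).1, x + y ∈ (g n).1 :=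
    fun n => (step n (g n)).2.2
  have hopen : ∀ n, IsOpen (g n).1 := fun n => (g n).2.1
  have hzero : ∀ n, (0 : K) ∈ (g n).1 := fun n => (g n).2.2.1
  have hsym : ∀ n, ∀ x ∈ (g n).1, -x ∈ (g n).1 := fun n => (g n).2.2.2.1
  have hsub : ∀ n, (g n).1 ⊆ V n := fun n => (g n).2.2.2.2
  refine ⟨{ carrier := ⋂ n, (g n).1
            zero_mem' := mem_iInter.2 hzero
            add_mem' := by
              intro a b ha hb
              refine mem_iInter.2 fun n => hadd n a ?_ b ?_
              · exact mem_iInter.1 ha (n + 1)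
              · exact mem_iInter.1 hb (n + 1)
            neg_mem' := by
              intro a ha
              exact mem_iInter.2 fun n => hsym n a (mem_iInter.1 ha n) }, ?_, ?_, ?_⟩
  · -- closedness: ⋂ U n = ⋂ closure (U n)
    have key : (⋂ n, (g n).1) = ⋂ n, closure (g n).1 := by
      apply Subset.antisymm
      · exact iInter_mono fun n => subset_closure
      · intro x hx
        refine mem_iInter.2 fun n => ?_
        have hxc : x ∈ closure (g (n + 1)).1 := mem_iInter.1 hx (n + 1)
        have hO : IsOpen ((x + ·) '' (g (n + 1)).1) :=
          (Homeomorph.addLeft x).isOpenMap _ (hopen (n + 1))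
        have hxO : x ∈ (x + ·) '' (g (n + 1)).1 := ⟨0, hzero _, by simp⟩
        obtain ⟨y, hyO, hyU⟩ := mem_closure_iff.1 hxc _ hO hxO
        obtain ⟨u, hu, rfl⟩ := hyO
        have : x = (x + u) + (-u) := by abel
        rw [this]
        exact hadd n _ hyU _ (hsym _ _ hu)
    change IsClosed (⋂ n, (g n).1)
    rw [key]
    exact isClosed_iInter fun n => isClosed_closure
  · exact IsGδ.iInter_of_isOpen hopen
  · intro x hx
    exact mem_iInter.2 fun n => hsub n (mem_iInter.1 hx n)

/-- If `K` is a compact Hausdorff abelian group whose torsion subgroup is at most countable,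
then there is a closed `G_δ` subgroup `N` of `K` meeting the torsion part only in `0`;
in particular `N` is torsion-free. -/
theorem stmt_8 {K : Type*} [AddCommGroup K] [TopologicalSpace K] [IsTopologicalAddGroup K]
    [CompactSpace K] [T2Space K]
    (hcount : Set.Countable {x : K | ∃ n : ℕ, 0 < n ∧ n • x = 0}) :
    ∃ N : AddSubgroup K, IsClosed (N : Set K) ∧ IsGδ (N : Set K) ∧
      (N : Set K) ∩ {x : K | ∃ n : ℕ, 0 < n ∧ n • x = 0} = {0} := by
  set T := {x : K | ∃ n : ℕ, 0 < n ∧ n • x = 0}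
  have hA : IsGδ (T \ {0})ᶜ := ((hcount.mono diff_subset).isGδ_compl)
  have h0 : (0 : K) ∈ (T \ {0})ᶜ := by simp
  obtain ⟨N, hNc, hNg, hNA⟩ := exists_closed_gdelta_subgroup hA h0
  refine ⟨N, hNc, hNg, ?_⟩
  apply Set.eq_singleton_iff_unique_mem.2
  constructor
  · exact ⟨N.zero_mem, ⟨1, one_pos, by simp⟩⟩
  · rintro x ⟨hxN, hxT⟩
    by_contra h
    exact hNA hxN ⟨hxT, h⟩
end

section
/- In a compact Hausdorff group, every G_δ subset containing the identity contains a closed G_δ subgroup. -/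
open Pointwise

/-- Shrinking lemma: in a compact group, every open neighborhood `V` of `1` contains a
symmetric open neighborhood `W` of `1` with `W * W ⊆ V` whose conjugates all land in `V`. -/
lemma stmt_9_step {K : Type*} [Group K] [TopologicalSpace K] [IsTopologicalGroup K]
    [CompactSpace K] (V : Set K) (hVo : IsOpen V) (hV1 : (1 : K) ∈ V) :
    ∃ W : Set K, IsOpen W ∧ (1 : K) ∈ W ∧ W⁻¹ = W ∧ W * W ⊆ V ∧
      ∀ k x : K, x ∈ W → k * x * k⁻¹ ∈ V := by
  -- conjugation-invariant part via the tube lemma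
  have hf : Continuous fun p : K × K => p.1 * p.2 * p.1⁻¹ := by continuity
  have hS : IsOpen ((fun p : K × K => p.1 * p.2 * p.1⁻¹) ⁻¹' V) := hVo.preimage hf
  have hsub : (Set.univ : Set K) ×ˢ ({1} : Set K) ⊆
      (fun p : K × K => p.1 * p.2 * p.1⁻¹) ⁻¹' V := by
    rintro ⟨k, x⟩ ⟨-, hx⟩
    simp only [Set.mem_singleton_iff] at hx
    simp [hx, hV1]
  obtain ⟨u, v, _, hvo, hu, hv1, huv⟩ :=
    generalized_tube_lemma isCompact_univ isCompact_singleton hS hsub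
  -- multiplication part
  obtain ⟨V', hV'o, hV'1, hV'mul⟩ :=
    exists_open_nhds_one_mul_subset (hVo.mem_nhds hV1)
  set W0 : Set K := v ∩ V' with hW0
  refine ⟨W0 ∩ W0⁻¹, (hvo.inter hV'o).inter (hvo.inter hV'o).inv,
    ⟨⟨hv1 rfl, hV'1⟩, by simpa [hW0] using (⟨hv1 rfl, hV'1⟩ : (1 : K) ∈ W0)⟩, ?_, ?_, ?_⟩
  · rw [Set.inter_inv, inv_inv, Set.inter_comm]
  · intro z hz
    obtain ⟨a, ha, b, hb, rfl⟩ := hz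
    exact hV'mul (Set.mul_mem_mul ha.1.2 hb.1.2)
  · intro k x hx
    exact huv (Set.mk_mem_prod (hu (Set.mem_univ k)) hx.1.1)

/-- In a compact Hausdorff group, every `G_δ` subset containing the identity contains a
closed normal `G_δ` subgroup. -/
theorem stmt_9 {K : Type*} [Group K] [TopologicalSpace K] [IsTopologicalGroup K]
    [CompactSpace K] [T2Space K] (U : Set K) (hU : IsGδ U) (h1 : (1 : K) ∈ U) :
    ∃ N : Subgroup K, N.Normal ∧ IsClosed (N : Set K) ∧ IsGδ (N : Set K) ∧
      (N : Set K) ⊆ U := by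
  obtain ⟨f, hfo, hfU⟩ := hU.eq_iInter_nat
  have h1n : ∀ n, (1 : K) ∈ f n := by
    intro n
    have := h1
    rw [hfU] at this
    exact Set.mem_iInter.1 this n
  choose st ho h1' hsymm hmul hconj using
    fun (V : Set K) (hVo : IsOpen V) (hV1 : (1 : K) ∈ V) => stmt_9_step V hVo hV1
  -- recursively shrink
  let W : ℕ → {s : Set K // IsOpen s ∧ (1 : K) ∈ s} := fun n =>
    Nat.rec
      ⟨st (f 0) (hfo 0) (h1n 0), ho _ _ _, h1' _ _ _⟩
      (fun m p =>
        ⟨st (p.1 ∩ f (m + 1)) (p.2.1.inter (hfo (m + 1))) ⟨p.2.2, h1n (m + 1)⟩,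
          ho _ _ _, h1' _ _ _⟩) n
  have hWsymm : ∀ n, ((W n).1)⁻¹ = (W n).1 := by
    intro n
    cases n with
    | zero => exact hsymm _ _ _
    | succ m => exact hsymm _ _ _
  have hWmul : ∀ n, (W (n + 1)).1 * (W (n + 1)).1 ⊆ (W n).1 ∩ f (n + 1) :=
    fun n => hmul _ _ _
  have hW0mul : (W 0).1 * (W 0).1 ⊆ f 0 := hmul _ _ _
  have hWconj : ∀ n (k x : K), x ∈ (W (n + 1)).1 → k * x * k⁻¹ ∈ (W n).1 ∩ f (n + 1) :=
    fun n => hconj _ _ _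
  have hWinv : ∀ n (x : K), x ∈ (W n).1 → x⁻¹ ∈ (W n).1 := by
    intro n x hx
    rw [← hWsymm n]
    exact Set.inv_mem_inv.2 hx
  have hWsub : ∀ n (x : K), x ∈ (W (n + 1)).1 → x ∈ (W n).1 := by
    intro n x hx
    have := hWmul n (Set.mul_mem_mul hx (W (n + 1)).2.2)
    rw [mul_one] at this
    exact this.1
  have hWf : ∀ n (x : K), x ∈ (W n).1 → x ∈ f n := by
    intro n x hx
    cases n with
    | zero =>
      have := hW0mul (Set.mul_mem_mul hx (W 0).2.2)
      rwa [mul_one] at this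
    | succ m =>
      have := hWmul m (Set.mul_mem_mul hx (W (m + 1)).2.2)
      rw [mul_one] at this
      exact this.2
  refine ⟨{
    carrier := ⋂ n, (W n).1
    one_mem' := Set.mem_iInter.2 fun n => (W n).2.2
    mul_mem' := by
      intro a b ha hb
      refine Set.mem_iInter.2 fun n => ?_
      exact (hWmul n (Set.mul_mem_mul (Set.mem_iInter.1 ha (n + 1))
        (Set.mem_iInter.1 hb (n + 1)))).1
    inv_mem' := by
      intro a ha
      exact Set.mem_iInter.2 fun n => hWinv n a (Set.mem_iInter.1 ha n) }, ?_, ?_, ?_, ?_⟩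
  · refine ⟨fun a ha k => ?_⟩
    refine Set.mem_iInter.2 fun n => ?_
    exact (hWconj n k a (Set.mem_iInter.1 ha (n + 1))).1
  · -- closedness
    have hclos : ∀ n, closure (W (n + 1)).1 ⊆ (W n).1 := by
      intro n x hx
      rw [mem_closure_iff] at hx
      obtain ⟨y, hy1, hy2⟩ := hx ((fun y => x⁻¹ * y) ⁻¹' (W (n + 1)).1)
        ((W (n + 1)).2.1.preimage (continuous_const.mul continuous_id))
        (by simp [(W (n + 1)).2.2])
      have hy1' : x⁻¹ * y ∈ (W (n + 1)).1 := hy1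
      have : y * (x⁻¹ * y)⁻¹ ∈ (W (n + 1)).1 * (W (n + 1)).1 :=
        Set.mul_mem_mul hy2 (hWinv (n + 1) (x⁻¹ * y) hy1')
      rw [mul_inv_rev, inv_inv, ← mul_assoc, mul_inv_cancel, one_mul] at this
      exact (hWmul n this).1
    have heq : (⋂ n, (W n).1) = ⋂ n, closure (W n).1 := by
      apply Set.Subset.antisymm
      · exact Set.iInter_mono fun n => subset_closure
      · intro x hx
        refine Set.mem_iInter.2 fun n => ?_
        exact hclos n (Set.mem_iInter.1 hx (n + 1))
    show IsClosed (⋂ n, (W n).1)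
    rw [heq]
    exact isClosed_iInter fun n => isClosed_closure
  · exact IsGδ.iInter_of_isOpen fun n => (W n).2.1
  · intro x hx
    rw [hfU]
    exact Set.mem_iInter.2 fun n => hWf n x (Set.mem_iInter.1 hx n)
end

section
/- Every dense subgroup of the symmetric group S(X) of an infinite set X (with the topology of pointwise convergence) is a minimal topological group. -/
def permTop (X : Type*) : TopologicalSpace (Equiv.Perm X) :=
  TopologicalSpace.induced (fun f : Equiv.Perm X => (f : X → X))
    (@Pi.topologicalSpace X (fun _ => X) (fun _ => ⊥))

namespace DS

open Filter Set Topology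

set_option linter.unusedSectionVars false

variable {X : Type*} [Infinite X]

/-- The discrete product topology on `X → X`. -/
def piD (X : Type*) : TopologicalSpace (X → X) :=
  @Pi.topologicalSpace X (fun _ => X) (fun _ => ⊥)

theorem permTop_eq (X : Type*) :
    permTop X = (piD X).induced (fun f : Equiv.Perm X => (f : X → X)) := rfl

variable (G : Subgroup (Equiv.Perm X))

/-- The subtype topology of pointwise convergence on `G`. -/
def sg : TopologicalSpace ↥G :=
  (piD X).induced (fun g : ↥G => ((g : Equiv.Perm X) : X → X))

theorem sg_eq_subtype :
    (TopologicalSpace.induced (Subtype.val) (permTop X) : TopologicalSpace ↥G) = sg G := by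
  rw [permTop_eq, induced_compose]; rfl

variable {G}

theorem cyl_open (a b : X) : @IsOpen (X → X) (piD X) {u | u a = b} := by
  letI : TopologicalSpace X := ⊥
  haveI : DiscreteTopology X := discreteTopology_bot X
  have : {u : X → X | u a = b} = Set.pi ({a} : Set X) (fun _ => ({b} : Set X)) := by
    ext u; simp [Set.mem_pi]
  rw [this]
  exact isOpen_set_pi (Set.finite_singleton a) (fun i _ => isOpen_discrete _)

theorem sg_agree_mem_nhds (g₀ : ↥G) (F : Finset X) :
    {h : ↥G | ∀ x ∈ F, (h : Equiv.Perm X) x = (g₀ : Equiv.Perm X) x} ∈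
      @nhds _ (sg G) g₀ := by
  letI : TopologicalSpace X := ⊥
  haveI : DiscreteTopology X := discreteTopology_bot X
  letI t := sg G
  have hopen : IsOpen[sg G]
      {h : ↥G | ∀ x ∈ F, (h : Equiv.Perm X) x = (g₀ : Equiv.Perm X) x} := by
    have : {h : ↥G | ∀ x ∈ F, (h : Equiv.Perm X) x = (g₀ : Equiv.Perm X) x} =
        (fun g : ↥G => ((g : Equiv.Perm X) : X → X)) ⁻¹'
          (Set.pi (↑F : Set X) (fun x => {(g₀ : Equiv.Perm X) x})) := by
      ext h; simp [Set.mem_pi]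
    rw [this]
    exact (isOpen_set_pi F.finite_toSet (fun i _ => isOpen_discrete _)).preimage
      continuous_induced_dom
  exact hopen.mem_nhds (by simp)

theorem sg_basic {O : Set ↥G} (hO : IsOpen[sg G] O) {g₀ : ↥G} (hg : g₀ ∈ O) :
    ∃ F : Finset X, ∀ h : ↥G,
      (∀ x ∈ F, (h : Equiv.Perm X) x = (g₀ : Equiv.Perm X) x) → h ∈ O := by
  letI : TopologicalSpace X := ⊥
  rw [show sg G = (piD X).induced (fun g : ↥G => ((g : Equiv.Perm X) : X → X)) from rfl,
    isOpen_induced_iff] at hO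
  obtain ⟨U, hU, rfl⟩ := hO
  rw [show piD X = @Pi.topologicalSpace X (fun _ => X) (fun _ => ⊥) from rfl,
    isOpen_pi_iff] at hU
  obtain ⟨I, u, hIu, hsub⟩ := hU _ hg
  refine ⟨I, fun h hagree => ?_⟩
  apply hsub
  intro a ha
  show ((h : Equiv.Perm X) : X → X) a ∈ u a
  rw [show ((h : Equiv.Perm X) : X → X) a = ((g₀ : Equiv.Perm X) : X → X) a from hagree a ha]
  exact (hIu a ha).2

end DS

namespace DS2

open Filter Set Topology DS

set_option linter.unusedSectionVars false

variable {X : Type*} [Infinite X] {G : Subgroup (Equiv.Perm X)}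
theorem dense_agree (hdense : @Dense (Equiv.Perm X) (permTop X) (G : Set (Equiv.Perm X))) (π : Equiv.Perm X) (F : Finset X) :
    ∃ g : ↥G, ∀ x ∈ F, (g : Equiv.Perm X) x = π x := by
  letI : TopologicalSpace (Equiv.Perm X) := permTop X
  letI : TopologicalSpace X := ⊥
  haveI : DiscreteTopology X := discreteTopology_bot X
  have hopen : IsOpen {f : Equiv.Perm X | ∀ x ∈ F, f x = π x} := by
    have : {f : Equiv.Perm X | ∀ x ∈ F, f x = π x} =
        (fun f : Equiv.Perm X => (f : X → X)) ⁻¹'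
          (Set.pi (↑F : Set X) (fun x => {π x})) := by
      ext f; simp [Set.mem_pi]
    rw [this]
    exact (isOpen_set_pi F.finite_toSet (fun i _ => isOpen_discrete _)).preimage
      continuous_induced_dom
  obtain ⟨f, hfG, hf⟩ := hdense.exists_mem_open hopen ⟨π, by simp⟩
  exact ⟨⟨f, hfG⟩, hf⟩

/-- Realize any finite injective pattern by an element of the dense subgroup. -/
theorem realize (hdense : @Dense (Equiv.Perm X) (permTop X) (G : Set (Equiv.Perm X))) {A : Finset X} {f : X → X} (hinj : Set.InjOn f (↑A : Set X)) :
    ∃ g : ↥G, ∀ x ∈ A, (g : Equiv.Perm X) x = f x := by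
  haveI : Finite (↑A : Set X) := A.finite_toSet.to_subtype
  have hcard : Cardinal.mk (↑A : Set X) < Cardinal.mk X :=
    lt_of_lt_of_le (Cardinal.lt_aleph0_of_finite _) (Cardinal.aleph0_le_mk X)
  obtain ⟨π, hπ⟩ := Cardinal.extend_function_of_lt
    ⟨(↑A : Set X).restrict f, hinj.injective⟩ hcard ⟨Equiv.refl X⟩
  obtain ⟨g, hg⟩ := dense_agree (G := G) hdense π A
  refine ⟨g, fun x hx => ?_⟩
  rw [hg x hx, hπ ⟨x, by simpa using hx⟩]
  rfl

end DS2

namespace DS3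

open Filter Set Topology DS DS2

set_option linter.unusedSectionVars false

variable {X : Type*} [Infinite X] {G : Subgroup (Equiv.Perm X)}
variable [ts : TopologicalSpace ↥G] [IsTopologicalGroup ↥G]

/-- Coercion application helper. -/
theorem coe_mul_apply (g h : ↥G) (x : X) :
    ((g * h : ↥G) : Equiv.Perm X) x = (g : Equiv.Perm X) ((h : Equiv.Perm X) x) := by
  simp

theorem coe_inv_apply (g : ↥G) {a b : X} (h : (g : Equiv.Perm X) a = b) :
    ((g⁻¹ : ↥G) : Equiv.Perm X) b = a := by
  have : ((g⁻¹ : ↥G) : Equiv.Perm X) = (g : Equiv.Perm X)⁻¹ := rfl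
  rw [this, Equiv.Perm.inv_def, Equiv.symm_apply_eq, h]

theorem coe_one_apply (x : X) : ((1 : ↥G) : Equiv.Perm X) x = x := by simp

/-- Shrinking lemma: symmetric neighborhood with products. -/
theorem shrink2 {V : Set ↥G} (hV : V ∈ 𝓝 (1 : ↥G)) :
    ∃ W ∈ 𝓝 (1 : ↥G), (∀ a ∈ W, ∀ b ∈ W, a * b ∈ V) ∧ (∀ a ∈ W, a⁻¹ ∈ W) ∧ W ⊆ V := by
  obtain ⟨V₀, hV₀open, hV₀mem, hV₀mul⟩ := exists_open_nhds_one_mul_subset hV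
  refine ⟨V₀ ∩ V₀⁻¹, ?_, ?_, ?_, ?_⟩
  · exact Filter.inter_mem (hV₀open.mem_nhds hV₀mem)
      ((hV₀open.inv).mem_nhds (by simpa using hV₀mem))
  · intro a ha b hb
    exact hV₀mul (Set.mul_mem_mul ha.1 hb.1)
  · rintro a ⟨h1, h2⟩
    exact ⟨by simpa using h2, by simpa using h1⟩
  · intro a ha
    have : a * 1 ∈ V := hV₀mul (Set.mul_mem_mul ha.1 hV₀mem)
    simpa using this

/-- Every `t'`-neighborhood of 1 contains a full finite-set stabilizer. -/
theorem nhd_fix_subset (hle : sg G ≤ ts) {V : Set ↥G} (hV : V ∈ 𝓝 (1 : ↥G)) :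
    ∃ F : Finset X, ∀ h : ↥G, (∀ x ∈ F, (h : Equiv.Perm X) x = x) → h ∈ V := by
  obtain ⟨O, hOV, hOopen, hO1⟩ := mem_nhds_iff.mp hV
  have hOsg : IsOpen[sg G] O := hOopen.mono hle
  obtain ⟨F, hF⟩ := sg_basic hOsg hO1
  exact ⟨F, fun h hh => hOV (hF h (fun x hx => by rw [hh x hx, coe_one_apply]))⟩

/-- Persistence of a transition `p ↦ q` near the identity. -/
def Per (p q : X) : Prop :=
  ∀ V ∈ 𝓝 (1 : ↥G), ∃ g ∈ V, (g : Equiv.Perm X) p = q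

theorem per_refl (p : X) : Per (G := G) p p :=
  fun V hV => ⟨1, mem_of_mem_nhds hV, coe_one_apply p⟩

theorem per_inv {p q : X} (h : Per (G := G) p q) : Per (G := G) q p := by
  intro V hV
  have hc : Continuous (fun g : ↥G => g⁻¹) := continuous_inv
  have : (fun g : ↥G => g⁻¹) ⁻¹' V ∈ 𝓝 (1 : ↥G) := by
    apply hc.continuousAt.preimage_mem_nhds; simpa using hV
  obtain ⟨g, hgV, hgp⟩ := h _ this
  exact ⟨g⁻¹, hgV, coe_inv_apply g hgp⟩

theorem per_comp {p q r : X} (h1 : Per (G := G) p q) (h2 : Per (G := G) q r) :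
    Per (G := G) p r := by
  intro V hV
  obtain ⟨W, hW, hWmul, _, _⟩ := shrink2 hV
  obtain ⟨g1, hg1, hg1p⟩ := h1 _ hW
  obtain ⟨g2, hg2, hg2q⟩ := h2 _ hW
  exact ⟨g2 * g1, hWmul _ hg2 _ hg1, by rw [coe_mul_apply, hg1p, hg2q]⟩

/-- The conjugation machine: one persistent pair generates many. -/
theorem per_machine (hdense : @Dense (Equiv.Perm X) (permTop X) (G : Set (Equiv.Perm X)))
    {p q : X} (hq : Per (G := G) p q) (hpq : p ≠ q) :
    ∀ r, r ≠ p → Per (G := G) q r := by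
  intro r hrp V hV
  letI := Classical.decEq X
  -- pick a ∈ G with a p = p and a r = q
  have hinj : Set.InjOn (fun x => if x = p then p else q) ((↑({p, r} : Finset X)) : Set X) := by
    intro x hx y hy hxy
    simp only [Finset.coe_insert, Set.mem_insert_iff, Finset.coe_singleton,
      Set.mem_singleton_iff] at hx hy
    rcases hx with rfl | rfl <;> rcases hy with rfl | rfl <;> simp_all
  obtain ⟨a, ha⟩ := realize (G := G) hdense hinj
  have hap : (a : Equiv.Perm X) p = p := by
    have := ha p (by simp); simpa using this
  have har : (a : Equiv.Perm X) r = q := by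
    have := ha r (by simp); simp only [if_neg hrp] at this; exact this
  -- continuous map g ↦ a⁻¹ * (g * (a * g⁻¹))
  set θ : ↥G → ↥G := fun g => a⁻¹ * (g * (a * g⁻¹)) with hθ
  have hθcont : Continuous θ := by
    fun_prop
  have hθ1 : θ 1 = 1 := by simp [hθ]
  have hpre : θ ⁻¹' V ∈ 𝓝 (1 : ↥G) := by
    apply hθcont.continuousAt.preimage_mem_nhds
    rw [hθ1]; exact hV
  obtain ⟨g, hgW, hgp⟩ := hq _ hpre
  refine ⟨θ g, hgW, ?_⟩
  have hginv : ((g⁻¹ : ↥G) : Equiv.Perm X) q = p := coe_inv_apply g hgp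
  have haq : (a : Equiv.Perm X)⁻¹ q = r := by
    have : ((a⁻¹ : ↥G) : Equiv.Perm X) q = r := coe_inv_apply a har
    exact this
  show ((a⁻¹ * (g * (a * g⁻¹)) : ↥G) : Equiv.Perm X) q = r
  rw [coe_mul_apply, coe_mul_apply, coe_mul_apply, hginv, hap, hgp]
  exact haq

theorem per_all (hdense : @Dense (Equiv.Perm X) (permTop X) (G : Set (Equiv.Perm X)))
    {p q : X} (hpq : p ≠ q) (hper : Per (G := G) p q) :
    ∀ u v : X, Per (G := G) u v := by
  letI := Classical.decEq X
  -- get a helper point s ∉ {p, q}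
  obtain ⟨s, hs⟩ := Infinite.exists_notMem_finset ({p, q} : Finset X)
  have hsp : s ≠ p := by intro h; apply hs; simp [h]
  have hsq : s ≠ q := by intro h; apply hs; simp [h]
  -- Per q r for all r ≠ p
  have h1 : ∀ r, r ≠ p → Per (G := G) q r := per_machine hdense hper hpq
  -- Per s q, s ≠ q; machine gives Per q r for all r ≠ s, in particular r = p
  have h2 : Per (G := G) s q := per_inv (h1 s hsp)
  have h3 : ∀ r, r ≠ s → Per (G := G) q r := per_machine hdense h2 hsq
  have hq_all : ∀ r, Per (G := G) q r := by
    intro r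
    by_cases hr : r = q
    · exact hr ▸ per_refl q
    · by_cases hrp : r = p
      · exact hrp ▸ h3 p (Ne.symm hsp)
      · exact h1 r hrp
  intro u v
  exact per_comp (per_inv (hq_all u)) (hq_all v)

/-- If movers of `z` are blocked into a finite set, a persistent pair exists. -/
theorem exists_per (hm : ∀ (x : X), ∀ V ∈ 𝓝 (1 : ↥G), ∃ g ∈ V, (g : Equiv.Perm X) x ≠ x)
    {z : X} {F : Finset X} {V₀ : Set ↥G} (hV₀ : V₀ ∈ 𝓝 (1 : ↥G))
    (hb : ∀ g ∈ V₀, (g : Equiv.Perm X) z ≠ z → ((g⁻¹ : ↥G) : Equiv.Perm X) z ∈ F) :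
    ∃ p q : X, p ≠ q ∧ Per (G := G) p q := by
  letI := Classical.decEq X
  by_contra hno
  push_neg at hno
  -- for each p ∈ F, p ≠ z, Per p z fails: get V_p killing it
  have hchoice : ∀ p : X, p ≠ z → ∃ Vp ∈ 𝓝 (1 : ↥G), ∀ g ∈ Vp, (g : Equiv.Perm X) p ≠ z := by
    intro p hp
    have := hno p z hp
    unfold Per at this
    push_neg at this
    obtain ⟨Vp, hVp, hVpg⟩ := this
    exact ⟨Vp, hVp, hVpg⟩
  choose Vp hVp hVpg using hchoice
  -- intersect over F
  set W : Set ↥G := V₀ ∩ ⋂ p ∈ F, (if h : p = z then Set.univ else Vp p h) with hW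
  have hWmem : W ∈ 𝓝 (1 : ↥G) := by
    apply Filter.inter_mem hV₀
    apply (Filter.biInter_finset_mem F).mpr
    intro p hp
    by_cases h : p = z
    · simp [h]
    · simp only [dif_neg h]; exact hVp p h
  obtain ⟨g, hgW, hgz⟩ := hm z W hWmem
  have hinF : ((g⁻¹ : ↥G) : Equiv.Perm X) z ∈ F := hb g hgW.1 hgz
  set p₀ := ((g⁻¹ : ↥G) : Equiv.Perm X) z with hp₀
  have hgp₀ : (g : Equiv.Perm X) p₀ = z := by
    have : ((g⁻¹⁻¹ : ↥G) : Equiv.Perm X) p₀ = z := coe_inv_apply g⁻¹ rfl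
    simpa using this
  have hp₀z : p₀ ≠ z := by
    intro h
    rw [h] at hgp₀
    exact hgz hgp₀
  have : g ∈ Vp p₀ hp₀z := by
    have h2 := hgW.2
    simp only [Set.mem_iInter] at h2
    have := h2 p₀ hinF
    rw [dif_neg hp₀z] at this
    exact this
  exact hVpg p₀ hp₀z g this hgp₀

/-- Escape lemma: movers with inverse-image outside any finite set. -/
theorem exists_escape (hdense : @Dense (Equiv.Perm X) (permTop X) (G : Set (Equiv.Perm X)))
    (hm : ∀ (x : X), ∀ V ∈ 𝓝 (1 : ↥G), ∃ g ∈ V, (g : Equiv.Perm X) x ≠ x)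
    (z : X) (F : Finset X) {V : Set ↥G} (hV : V ∈ 𝓝 (1 : ↥G)) :
    ∃ g ∈ V, (g : Equiv.Perm X) z ≠ z ∧ ((g⁻¹ : ↥G) : Equiv.Perm X) z ∉ F := by
  letI := Classical.decEq X
  by_cases hb : ∀ g ∈ V, (g : Equiv.Perm X) z ≠ z → ((g⁻¹ : ↥G) : Equiv.Perm X) z ∈ F
  · obtain ⟨p, q, hpq, hper⟩ := exists_per hm hV hb
    obtain ⟨v, hv⟩ := Infinite.exists_notMem_finset (insert z F)
    have hvz : v ≠ z := by intro h; apply hv; simp [h]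
    have hvF : v ∉ F := fun h => hv (by simp [h])
    obtain ⟨g, hgV, hgv⟩ := per_all hdense hpq hper v z V hV
    refine ⟨g, hgV, ?_, ?_⟩
    · intro h
      exact hvz ((g : Equiv.Perm X).injective (hgv.trans h.symm))
    · have : ((g⁻¹ : ↥G) : Equiv.Perm X) z = v := coe_inv_apply g hgv
      rw [this]; exact hvF
  · push_neg at hb
    obtain ⟨g, hgV, hgz, hout⟩ := hb
    exact ⟨g, hgV, hgz, hout⟩

/-- Controlled movers: move `z` to any sufficiently fresh point `v`,
fixing a prescribed finite set `B`. -/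
theorem controlled_mover (hdense : @Dense (Equiv.Perm X) (permTop X) (G : Set (Equiv.Perm X)))
    (hm : ∀ (x : X), ∀ V ∈ 𝓝 (1 : ↥G), ∃ g ∈ V, (g : Equiv.Perm X) x ≠ x)
    (hle : sg G ≤ ts) (z : X) (B : Finset X) (hzB : z ∉ B)
    {V : Set ↥G} (hV : V ∈ 𝓝 (1 : ↥G)) :
    ∃ F : Finset X, ∀ v, v ∉ F →
      ∃ k ∈ V, (k : Equiv.Perm X) z = v ∧ ∀ b ∈ B, (k : Equiv.Perm X) b = b := by
  letI := Classical.decEq X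
  obtain ⟨W₁, hW₁, hW₁mul, hW₁inv, hW₁sub⟩ := shrink2 hV
  obtain ⟨W, hW, hWmul, hWinv, hWsub⟩ := shrink2 hW₁
  obtain ⟨F₁, hF₁⟩ := nhd_fix_subset hle hW
  set Fbig : Finset X := F₁ ∪ B ∪ {z} with hFbig
  obtain ⟨g, hgW, hgz, hgesc⟩ := exists_escape hdense hm z Fbig hW
  set w : X := ((g⁻¹ : ↥G) : Equiv.Perm X) z with hw
  set ginv : X → X := fun x => ((g⁻¹ : ↥G) : Equiv.Perm X) x with hginv
  set D : Finset X := Fbig ∪ B.image ginv with hD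
  have hwD : w ∉ D := by
    rw [hD]
    simp only [Finset.mem_union, Finset.mem_image, not_or]
    refine ⟨hgesc, ?_⟩
    rintro ⟨b, hb, hbw⟩
    -- ginv b = w would give b = z
    have : b = z := by
      have h1 : (g : Equiv.Perm X) (ginv b) = b := by
        simp [hginv]
      have h2 : (g : Equiv.Perm X) w = z := by
        simp [hw]
      rw [hbw] at h1; rw [h1] at h2; exact h2
    exact hzB (this ▸ hb)
  obtain ⟨r, hr⟩ := Infinite.exists_notMem_finset (D ∪ Fbig.image ginv ∪ {w})
  have hrD : r ∉ D := fun h => hr (by simp [h])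
  have hrw : r ≠ w := fun h => hr (by simp [h])
  have hgr : (g : Equiv.Perm X) r ∉ Fbig := by
    intro hmem
    apply hr
    have : r = ginv ((g : Equiv.Perm X) r) := by simp [hginv]
    simp only [Finset.mem_union]
    left; right
    exact Finset.mem_image.mpr ⟨_, hmem, this.symm⟩
  -- build t
  have htinj : Set.InjOn (fun x => if x = w then r else x)
      ((↑(D ∪ {w} : Finset X)) : Set X) := by
    intro x hx y hy hxy
    by_cases hxw : x = w <;> by_cases hyw : y = w
    · rw [hxw, hyw]
    · simp only [if_pos hxw, if_neg hyw] at hxy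
      exfalso; apply hrD
      rw [hxy]
      have : y ∈ (↑(D ∪ {w} : Finset X) : Set X) := hy
      simp only [Finset.coe_union, Set.mem_union, Finset.coe_singleton,
        Set.mem_singleton_iff] at this
      rcases this with h | h
      · exact h
      · exact absurd h hyw
    · simp only [if_neg hxw, if_pos hyw] at hxy
      exfalso; apply hrD
      rw [← hxy]
      have : x ∈ (↑(D ∪ {w} : Finset X) : Set X) := hx
      simp only [Finset.coe_union, Set.mem_union, Finset.coe_singleton,
        Set.mem_singleton_iff] at this
      rcases this with h | h
      · exact h
      · exact absurd h hxw
    · simpa [if_neg hxw, if_neg hyw] using hxy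
  obtain ⟨t, ht⟩ := realize (G := G) hdense htinj
  have htW : t ∈ W := by
    apply hF₁
    intro x hx
    have hxD : x ∈ D := by rw [hD]; simp [hFbig, Finset.mem_union, hx]
    have hxw : x ≠ w := fun h => hwD (h ▸ hxD)
    have := ht x (by simp [hxD])
    rwa [if_neg hxw] at this
  set s : X := (g : Equiv.Perm X) r with hs
  have hsF : s ∉ Fbig := hgr
  refine ⟨Fbig, fun v hv => ?_⟩
  -- build u'
  have huinj : Set.InjOn (fun x => if x = s then v else x)
      ((↑(Fbig ∪ {s} : Finset X)) : Set X) := by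
    intro x hx y hy hxy
    by_cases hxs : x = s <;> by_cases hys : y = s
    · rw [hxs, hys]
    · simp only [if_pos hxs, if_neg hys] at hxy
      exfalso
      have hyF : y ∈ Fbig := by
        have : y ∈ (↑(Fbig ∪ {s} : Finset X) : Set X) := hy
        simp only [Finset.coe_union, Set.mem_union, Finset.coe_singleton,
          Set.mem_singleton_iff] at this
        rcases this with h | h
        · exact h
        · exact absurd h hys
      rw [← hxy] at hyF; exact hv hyF
    · simp only [if_neg hxs, if_pos hys] at hxy
      exfalso
      have hxF : x ∈ Fbig := by
        have : x ∈ (↑(Fbig ∪ {s} : Finset X) : Set X) := hx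
        simp only [Finset.coe_union, Set.mem_union, Finset.coe_singleton,
          Set.mem_singleton_iff] at this
        rcases this with h | h
        · exact h
        · exact absurd h hxs
      rw [hxy] at hxF; exact hv hxF
    · simpa [if_neg hxs, if_neg hys] using hxy
  obtain ⟨u', hu'⟩ := realize (G := G) hdense huinj
  have hu'W : u' ∈ W := by
    apply hF₁
    intro x hx
    have hxF : x ∈ Fbig := by simp [hFbig, Finset.mem_union, hx]
    have hxs : x ≠ s := fun h => hsF (h ▸ hxF)
    have := hu' x (by simp [hxF])
    rwa [if_neg hxs] at this
  refine ⟨(u' * g) * (t * g⁻¹), ?_, ?_, ?_⟩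
  · exact hW₁mul _ (hWmul _ hu'W _ hgW) _ (hWmul _ htW _ (hWinv _ hgW))
  · -- value at z
    rw [coe_mul_apply, coe_mul_apply, coe_mul_apply]
    have h1 : ((g⁻¹ : ↥G) : Equiv.Perm X) z = w := rfl
    rw [h1]
    have h2 : (t : Equiv.Perm X) w = r := by
      have := ht w (by simp)
      rwa [if_pos rfl] at this
    rw [h2, ← hs]
    have h4 : (u' : Equiv.Perm X) s = v := by
      have := hu' s (by simp)
      rwa [if_pos rfl] at this
    exact h4
  · -- fixes B
    intro b hb
    rw [coe_mul_apply, coe_mul_apply, coe_mul_apply]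
    have hbD : ginv b ∈ D := by
      rw [hD]; simp only [Finset.mem_union]; right
      exact Finset.mem_image.mpr ⟨b, hb, rfl⟩
    have hbw : ginv b ≠ w := fun h => hwD (h ▸ hbD)
    have h1 : (t : Equiv.Perm X) (((g⁻¹ : ↥G) : Equiv.Perm X) b) = ginv b := by
      have := ht (ginv b) (by simp [hbD])
      rwa [if_neg hbw] at this
    rw [h1]
    have h2 : (g : Equiv.Perm X) (ginv b) = b := by simp [hginv]
    rw [h2]
    have hbF : b ∈ Fbig := by simp [hFbig, Finset.mem_union, hb]
    have hbs : b ≠ s := fun h => hsF (h ▸ hbF)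
    have h3 := hu' b (by simp [hbF])
    rwa [if_neg hbs] at h3

/-- Moving a finite list of points out of a finite set `S`. -/
theorem move_out (hdense : @Dense (Equiv.Perm X) (permTop X) (G : Set (Equiv.Perm X)))
    (hm : ∀ (x : X), ∀ V ∈ 𝓝 (1 : ↥G), ∃ g ∈ V, (g : Equiv.Perm X) x ≠ x)
    (hle : sg G ≤ ts) :
    ∀ (l : List X), l.Nodup → ∀ (S : Finset X), ∀ V ∈ 𝓝 (1 : ↥G),
      ∃ g ∈ V, ∀ z ∈ l, (g : Equiv.Perm X) z ∉ S := by
  letI := Classical.decEq X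
  intro l
  induction l with
  | nil => intro _ S V hV; exact ⟨1, mem_of_mem_nhds hV, by simp⟩
  | cons z l' ih =>
    intro hnd S V hV
    obtain ⟨W, hW, hWmul, hWinv, hWsub⟩ := shrink2 hV
    obtain ⟨g, hgW, hg⟩ := ih hnd.of_cons S W hW
    set B : Finset X := l'.toFinset.image (fun x => (g : Equiv.Perm X) x) with hB
    have hzB : (g : Equiv.Perm X) z ∉ B := by
      rw [hB]
      simp only [Finset.mem_image, List.mem_toFinset]
      rintro ⟨x, hx, hxz⟩
      have : x = z := (g : Equiv.Perm X).injective hxz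
      rw [this] at hx
      exact (List.nodup_cons.mp hnd).1 hx
    obtain ⟨F, hF⟩ := controlled_mover hdense hm hle ((g : Equiv.Perm X) z) B hzB hW
    obtain ⟨tt, htt⟩ := Infinite.exists_notMem_finset (F ∪ S)
    have httF : tt ∉ F := fun h => htt (by simp [h])
    have httS : tt ∉ S := fun h => htt (by simp [h])
    obtain ⟨k, hkW, hkz, hkB⟩ := hF tt httF
    refine ⟨k * g, hWmul _ hkW _ hgW, ?_⟩
    intro x hx
    rcases List.mem_cons.mp hx with rfl | hx'
    · rw [coe_mul_apply, hkz]; exact httS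
    · rw [coe_mul_apply]
      have : (k : Equiv.Perm X) ((g : Equiv.Perm X) x) = (g : Equiv.Perm X) x := by
        apply hkB
        rw [hB]
        exact Finset.mem_image.mpr ⟨x, List.mem_toFinset.mpr hx', rfl⟩
      rw [this]
      exact hg x hx'

/-- Invariant for the endgame induction. -/
def Real (a₀ : ↥G) (S : Finset X) (l₁ l₂ : List X) : Prop :=
  ∀ V ∈ 𝓝 (1 : ↥G), ∃ g ∈ V,
    (∀ e ∈ l₁, (g : Equiv.Perm X) e = (a₀ : Equiv.Perm X) e) ∧
    (∀ z ∈ l₂, (g : Equiv.Perm X) z ∉ S)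

theorem real_step (hdense : @Dense (Equiv.Perm X) (permTop X) (G : Set (Equiv.Perm X)))
    (hm : ∀ (x : X), ∀ V ∈ 𝓝 (1 : ↥G), ∃ g ∈ V, (g : Equiv.Perm X) x ≠ x)
    (hle : sg G ≤ ts) {a₀ : ↥G} {S : Finset X} {l₁ l₂ : List X} {e : X}
    (hnd : (l₁ ++ e :: l₂).Nodup)
    (hS : ∀ x ∈ l₁ ++ e :: l₂, x ∈ S ∧ (a₀ : Equiv.Perm X) x ∈ S)
    (h : Real (G := G) a₀ S l₁ (e :: l₂)) :
    Real (G := G) a₀ S (l₁ ++ [e]) l₂ := by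
  letI := Classical.decEq X
  intro V hV
  obtain ⟨W₁, hW₁, hW₁mul, hW₁inv, hW₁sub⟩ := shrink2 hV
  obtain ⟨W, hW, hWmul, hWinv, hWsub⟩ := shrink2 hW₁
  obtain ⟨g, hgW, hg1, hg2⟩ := h W hW
  set B : Finset X := l₁.toFinset.image (fun x => (a₀ : Equiv.Perm X) x) ∪
      l₂.toFinset.image (fun x => (g : Equiv.Perm X) x) with hB
  have hel₁ : e ∉ l₁ := by
    intro hmem
    have h1 : List.Disjoint l₁ (e :: l₂) := List.disjoint_of_nodup_append hnd
    exact h1 hmem List.mem_cons_self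
  have hel₂ : e ∉ l₂ := by
    have h2 : (e :: l₂).Nodup := (List.nodup_append.mp hnd).2.1
    exact (List.nodup_cons.mp h2).1
  have hl₁l₂ : ∀ x ∈ l₁, x ∉ l₂ := by
    intro x hx hx2
    have h1 : List.Disjoint l₁ (e :: l₂) := List.disjoint_of_nodup_append hnd
    exact h1 hx (List.mem_cons_of_mem e hx2)
  -- z₁ := g e  is not in B
  have hz₁ : (g : Equiv.Perm X) e ∉ B := by
    rw [hB]
    simp only [Finset.mem_union, Finset.mem_image, List.mem_toFinset, not_or]
    constructor
    · rintro ⟨x, hx, hxe⟩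
      -- a₀ x ∈ S but g e ∉ S
      have hge : (g : Equiv.Perm X) e ∉ S := hg2 e List.mem_cons_self
      apply hge
      rw [← hxe]
      exact (hS x (by simp [hx])).2
    · rintro ⟨x, hx, hxe⟩
      have : x = e := (g : Equiv.Perm X).injective hxe
      exact hel₂ (this ▸ hx)
  -- z₂ := a₀ e  is not in B
  have hz₂ : (a₀ : Equiv.Perm X) e ∉ B := by
    rw [hB]
    simp only [Finset.mem_union, Finset.mem_image, List.mem_toFinset, not_or]
    constructor
    · rintro ⟨x, hx, hxe⟩
      have : x = e := (a₀ : Equiv.Perm X).injective hxe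
      exact hel₁ (this ▸ hx)
    · rintro ⟨x, hx, hxe⟩
      have hgx : (g : Equiv.Perm X) x ∉ S := hg2 x (List.mem_cons_of_mem e hx)
      apply hgx
      rw [hxe]
      exact (hS e (by simp)).2
  obtain ⟨Fk, hFk⟩ := controlled_mover hdense hm hle ((g : Equiv.Perm X) e) B hz₁ hW
  obtain ⟨Fk', hFk'⟩ := controlled_mover hdense hm hle ((a₀ : Equiv.Perm X) e) B hz₂ hW
  obtain ⟨tt, htt⟩ := Infinite.exists_notMem_finset (Fk ∪ Fk' ∪ S)
  obtain ⟨k, hkW, hkz, hkB⟩ := hFk tt (fun h => htt (by simp [h]))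
  obtain ⟨k', hk'W, hk'z, hk'B⟩ := hFk' tt (fun h => htt (by simp [h]))
  refine ⟨(k'⁻¹ * k) * g, hW₁mul _ (hWmul _ (hWinv _ hk'W) _ hkW) _ (hWsub hgW), ?_, ?_⟩
  · intro x hx
    rcases List.mem_append.mp hx with hx1 | hx2
    · -- x ∈ l₁ : both k and k' fix a₀ x
      rw [coe_mul_apply, coe_mul_apply, hg1 x hx1]
      have hmem : (a₀ : Equiv.Perm X) x ∈ B := by
        rw [hB]
        exact Finset.mem_union_left _
          (Finset.mem_image.mpr ⟨x, List.mem_toFinset.mpr hx1, rfl⟩)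
      rw [hkB _ hmem]
      exact coe_inv_apply k' (hk'B _ hmem)
    · -- x = e
      have hxe : x = e := by simpa using hx2
      subst hxe
      rw [coe_mul_apply, coe_mul_apply, hkz]
      exact coe_inv_apply k' hk'z
  · intro x hx
    rw [coe_mul_apply, coe_mul_apply]
    have hmem : (g : Equiv.Perm X) x ∈ B := by
      rw [hB]
      exact Finset.mem_union_right _
        (Finset.mem_image.mpr ⟨x, List.mem_toFinset.mpr hx, rfl⟩)
    rw [hkB _ hmem, coe_inv_apply k' (hk'B _ hmem)]
    exact hg2 x (List.mem_cons_of_mem e hx)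

theorem real_finish (hdense : @Dense (Equiv.Perm X) (permTop X) (G : Set (Equiv.Perm X)))
    (hm : ∀ (x : X), ∀ V ∈ 𝓝 (1 : ↥G), ∃ g ∈ V, (g : Equiv.Perm X) x ≠ x)
    (hle : sg G ≤ ts) {a₀ : ↥G} {S : Finset X} :
    ∀ (l₂ l₁ : List X), (l₁ ++ l₂).Nodup →
      (∀ x ∈ l₁ ++ l₂, x ∈ S ∧ (a₀ : Equiv.Perm X) x ∈ S) →
      Real (G := G) a₀ S l₁ l₂ →
      ∀ V ∈ 𝓝 (1 : ↥G), ∃ g ∈ V, ∀ e ∈ l₁ ++ l₂, (g : Equiv.Perm X) e = (a₀ : Equiv.Perm X) e := by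
  intro l₂
  induction l₂ with
  | nil =>
    intro l₁ hnd hS hreal V hV
    obtain ⟨g, hgV, hg1, _⟩ := hreal V hV
    exact ⟨g, hgV, by simpa using hg1⟩
  | cons e l₂ ih =>
    intro l₁ hnd hS hreal V hV
    have hstep := real_step hdense hm hle hnd hS hreal
    have heq : (l₁ ++ [e]) ++ l₂ = l₁ ++ e :: l₂ := by simp
    have := ih (l₁ ++ [e]) (by rw [heq]; exact hnd) (by rw [heq]; exact hS) hstep V hV
    obtain ⟨g, hgV, hg⟩ := this
    exact ⟨g, hgV, fun x hx => hg x (by rw [heq]; exact hx)⟩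

theorem stab_mem (hdense : @Dense (Equiv.Perm X) (permTop X) (G : Set (Equiv.Perm X)))
    (hle : sg G ≤ ts) [T2Space ↥G] :
    ∀ x : X, {g : ↥G | (g : Equiv.Perm X) x = x} ∈ 𝓝 (1 : ↥G) := by
  letI := Classical.decEq X
  by_contra hno
  push_neg at hno
  obtain ⟨x₀, hx₀⟩ := hno
  -- every stabilizer fails to be a neighborhood
  have hall : ∀ x : X, {g : ↥G | (g : Equiv.Perm X) x = x} ∉ 𝓝 (1 : ↥G) := by
    intro x hx
    apply hx₀
    have hinj : Set.InjOn (fun _ => x₀) ((↑({x} : Finset X)) : Set X) := by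
      intro a ha b hb _
      simp only [Finset.coe_singleton, Set.mem_singleton_iff] at ha hb
      rw [ha, hb]
    obtain ⟨c, hc⟩ := realize (G := G) hdense hinj
    have hcx : (c : Equiv.Perm X) x = x₀ := hc x (by simp)
    set η : ↥G → ↥G := fun g => c⁻¹ * (g * c) with hη
    have hηcont : Continuous η := by fun_prop
    have hη1 : η 1 = 1 := by simp [hη]
    have hkey : η ⁻¹' {g : ↥G | (g : Equiv.Perm X) x = x} =
        {g : ↥G | (g : Equiv.Perm X) x₀ = x₀} := by
      ext g
      simp only [Set.mem_preimage, Set.mem_setOf_eq, hη]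
      rw [coe_mul_apply, coe_mul_apply]
      have hci : ((c⁻¹ : ↥G) : Equiv.Perm X) = (c : Equiv.Perm X)⁻¹ := rfl
      rw [hci]
      constructor
      · intro h
        have h' : (g : Equiv.Perm X) ((c : Equiv.Perm X) x) = (c : Equiv.Perm X) x := by
          have := congrArg (fun y => (c : Equiv.Perm X) y) h
          rwa [Equiv.Perm.inv_def, Equiv.apply_symm_apply] at this
        rwa [hcx] at h'
      · intro h
        rw [hcx, h, ← hcx]
        exact Equiv.symm_apply_apply _ _
    have := hηcont.continuousAt.preimage_mem_nhds (by rw [hη1]; exact hx)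
    rwa [hkey] at this
  -- movers everywhere
  have hm : ∀ (x : X), ∀ V ∈ 𝓝 (1 : ↥G), ∃ g ∈ V, (g : Equiv.Perm X) x ≠ x := by
    intro x V hV
    by_contra h'
    push_neg at h'
    exact hall x (mem_of_superset hV h')
  -- a nontrivial element a₀
  obtain ⟨x₁⟩ := (inferInstance : Nonempty X)
  obtain ⟨y₁, hy₁⟩ := Infinite.exists_notMem_finset ({x₁} : Finset X)
  have hxy : x₁ ≠ y₁ := fun h => hy₁ (by simp [h])
  have hinj : Set.InjOn (fun _ => y₁) ((↑({x₁} : Finset X)) : Set X) := by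
    intro a ha b hb _
    simp only [Finset.coe_singleton, Set.mem_singleton_iff] at ha hb
    rw [ha, hb]
  obtain ⟨a₀, ha₀⟩ := realize (G := G) hdense hinj
  have ha₀x : (a₀ : Equiv.Perm X) x₁ = y₁ := ha₀ x₁ (by simp)
  have ha₀ne : a₀ ≠ 1 := by
    intro h
    rw [h, coe_one_apply] at ha₀x
    exact hxy ha₀x
  -- closed neighborhood of 1 avoiding a₀
  have h1 : ({a₀}ᶜ : Set ↥G) ∈ 𝓝 (1 : ↥G) :=
    (isOpen_compl_singleton).mem_nhds (by simp [Ne.symm ha₀ne])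
  obtain ⟨Vc, hVc, hVcclosed, hVcsub⟩ := exists_mem_nhds_isClosed_subset h1
  have ha₀Vc : a₀ ∉ Vc := fun h => (hVcsub h) rfl
  -- σ-separation: finite set of disagreement
  have hE : ∃ E : Finset X, ∀ g ∈ Vc, ¬ (∀ e ∈ E, (g : Equiv.Perm X) e = (a₀ : Equiv.Perm X) e) := by
    by_contra hC
    push_neg at hC
    apply ha₀Vc
    rw [← hVcclosed.closure_eq, mem_closure_iff]
    intro O hO ha₀O
    obtain ⟨F, hF⟩ := sg_basic (hO.mono hle) ha₀O
    obtain ⟨g, hgVc, hg⟩ := hC F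
    exact ⟨g, hF g hg, hgVc⟩
  obtain ⟨E₀, hE₀⟩ := hE
  set S : Finset X := E₀ ∪ E₀.image (fun x => (a₀ : Equiv.Perm X) x) with hSdef
  set l : List X := E₀.toList with hl
  have hnd : (([] : List X) ++ l).Nodup := by
    simpa [hl] using E₀.nodup_toList
  have hSmem : ∀ x ∈ ([] : List X) ++ l, x ∈ S ∧ (a₀ : Equiv.Perm X) x ∈ S := by
    intro x hx
    simp only [List.nil_append, hl, Finset.mem_toList] at hx
    constructor
    · rw [hSdef]; exact Finset.mem_union_left _ hx
    · rw [hSdef]; exact Finset.mem_union_right _ (Finset.mem_image.mpr ⟨x, hx, rfl⟩)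
  have hreal : Real (G := G) a₀ S [] l := by
    intro V hV
    obtain ⟨g, hgV, hg⟩ := move_out hdense hm hle l (by simpa [hl] using E₀.nodup_toList) S V hV
    exact ⟨g, hgV, by simp, hg⟩
  obtain ⟨g, hgVc, hg⟩ := real_finish hdense hm hle l [] hnd hSmem hreal Vc hVc
  apply hE₀ g hgVc
  intro e he
  exact hg e (by simp [hl, Finset.mem_toList, he])

end DS3

namespace DS4

open Filter Set Topology DS DS2 DS3

set_option linter.unusedSectionVars false

theorem permCyl_open {X : Type*} [Infinite X] (a b : X) :
    IsOpen[permTop X] {f : Equiv.Perm X | f a = b} := by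
  letI : TopologicalSpace (Equiv.Perm X) := permTop X
  letI : TopologicalSpace (X → X) := piD X
  have hc : Continuous (fun f : Equiv.Perm X => (f : X → X)) := continuous_induced_dom
  have hs : {f : Equiv.Perm X | f a = b} =
      (fun f : Equiv.Perm X => (f : X → X)) ⁻¹' {u | u a = b} := rfl
  rw [hs]
  exact (cyl_open a b).preimage hc

theorem permTop_topGroup (X : Type*) [Infinite X] :
    @IsTopologicalGroup (Equiv.Perm X) (permTop X) _ := by
  letI : TopologicalSpace (Equiv.Perm X) := permTop X
  letI : TopologicalSpace X := ⊥
  haveI : DiscreteTopology X := discreteTopology_bot X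
  refine { toContinuousMul := ⟨?_⟩, toContinuousInv := ⟨?_⟩ }
  · -- continuous mul
    rw [permTop_eq X, continuous_induced_rng]
    apply continuous_pi
    intro x
    rw [continuous_discrete_rng]
    intro c
    have hset : ((fun p : Equiv.Perm X × Equiv.Perm X => ((p.1 * p.2 : Equiv.Perm X) : X → X) x) ⁻¹' {c}) =
        ⋃ y : X, ({f : Equiv.Perm X | f y = c} ×ˢ {f : Equiv.Perm X | f x = y}) := by
      ext p
      simp only [Set.mem_preimage, Set.mem_singleton_iff, Set.mem_iUnion, Set.mem_prod,
        Set.mem_setOf_eq, Equiv.Perm.mul_apply]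
      constructor
      · intro h; exact ⟨p.2 x, h, rfl⟩
      · rintro ⟨y, h1, h2⟩; rw [h2]; exact h1
    show IsOpen ((fun p : Equiv.Perm X × Equiv.Perm X => ((p.1 * p.2 : Equiv.Perm X) : X → X) x) ⁻¹' {c})
    rw [hset]
    exact isOpen_iUnion fun y => (permCyl_open y c).prod (permCyl_open x y)
  · -- continuous inv
    rw [permTop_eq X, continuous_induced_rng]
    apply continuous_pi
    intro x
    rw [continuous_discrete_rng]
    intro c
    have hset : ((fun f : Equiv.Perm X => ((f⁻¹ : Equiv.Perm X) : X → X) x) ⁻¹' {c}) =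
        {f : Equiv.Perm X | f c = x} := by
      ext f
      simp only [Set.mem_preimage, Set.mem_singleton_iff, Set.mem_setOf_eq]
      constructor
      · intro h; rw [← h]; exact f.apply_symm_apply x
      · intro h; rw [← h]; exact f.symm_apply_apply c
    show IsOpen ((fun f : Equiv.Perm X => ((f⁻¹ : Equiv.Perm X) : X → X) x) ⁻¹' {c})
    rw [hset]
    exact permCyl_open c x

end DS4

namespace DS5

open Filter Set Topology DS DS2 DS3

set_option linter.unusedSectionVars false

variable {X : Type*} [Infinite X] {G : Subgroup (Equiv.Perm X)}
variable [ts : TopologicalSpace ↥G] [IsTopologicalGroup ↥G]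

theorem main_eq (hdense : @Dense (Equiv.Perm X) (permTop X) (G : Set (Equiv.Perm X)))
    (hle : sg G ≤ ts) [T2Space ↥G]
    (hsgtg : @IsTopologicalGroup ↥G (sg G) _) : ts = sg G := by
  have hstab := stab_mem hdense hle
  have hnh : @nhds ↥G (sg G) 1 = 𝓝 (1 : ↥G) := by
    apply le_antisymm
    · exact nhds_mono hle
    · intro M hM
      obtain ⟨O, hOM, hOopen, hO1⟩ := (@mem_nhds_iff ↥G (sg G) (1 : ↥G) M).mp hM
      obtain ⟨F, hF⟩ := sg_basic hOopen hO1
      have hNmem : {h : ↥G | ∀ x ∈ F, (h : Equiv.Perm X) x = x} ∈ 𝓝 (1 : ↥G) := by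
        have heq : {h : ↥G | ∀ x ∈ F, (h : Equiv.Perm X) x = x} =
            ⋂ x ∈ F, {g : ↥G | (g : Equiv.Perm X) x = x} := by
          ext h; simp
        rw [heq]
        exact (Filter.biInter_finset_mem F).mpr (fun x _ => hstab x)
      apply mem_of_superset hNmem
      intro h hh
      apply hOM
      apply hF
      intro x hx
      rw [coe_one_apply]
      exact hh x hx
  exact IsTopologicalGroup.ext ‹IsTopologicalGroup ↥G› hsgtg hnh.symm

end DS5

/-- (Dierolf–Schwanengel) Every dense subgroup of the symmetric group of an infinite set,
with the topology of pointwise convergence, is a minimal topological group. -/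
theorem stmt_16 {X : Type*} [Infinite X] (G : Subgroup (Equiv.Perm X))
    (hdense : @Dense (Equiv.Perm X) (permTop X) (G : Set (Equiv.Perm X))) :
    letI : TopologicalSpace (Equiv.Perm X) := permTop X
    ∀ t' : TopologicalSpace G, @IsTopologicalGroup G t' _ → @T2Space G t' →
      (instTopologicalSpaceSubtype : TopologicalSpace G) ≤ t' →
      t' = (instTopologicalSpaceSubtype : TopologicalSpace G) := by
  intro t' htg ht2 hle
  letI : TopologicalSpace (Equiv.Perm X) := permTop X
  haveI hPG : IsTopologicalGroup (Equiv.Perm X) := DS4.permTop_topGroup X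
  have hsub_eq : (instTopologicalSpaceSubtype : TopologicalSpace ↥G) = DS.sg G :=
    DS.sg_eq_subtype G
  have hle' : DS.sg G ≤ t' := hsub_eq ▸ hle
  have hsubG : @IsTopologicalGroup ↥G (instTopologicalSpaceSubtype) _ := inferInstance
  have hsgtg : @IsTopologicalGroup ↥G (DS.sg G) _ := hsub_eq ▸ hsubG
  have hmain : t' = DS.sg G :=
    @DS5.main_eq X _ G t' htg hdense hle' ht2 hsgtg
  rw [hsub_eq]
  exact hmain
end
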